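/- arXiv:2010.11597 — 3 statements merged into one kernel-verified Lean document; each statement's English description precedes it below -/
import Mathlib

section
/- Assume the Continuum Hypothesis, i.e., 2^{ℵ₀} = ℵ₁. If T is a subtree of ^{<ω₁}ω₁ that is an ω₁-Kurepa subtree, then the set [T] is not a continuous image of ^{ω₁}ω₁. -/
open Cardinal Set

noncomputable section

namespace GBaire

universe u

/-- The underlying well-ordered set of the cardinal `κ`, i.e. the type of ordinals `< κ`. -/
abbrev K (κ : Cardinal.{u}) : Type u := κ.ord.ToType

/-- The set `^{<κ}κ` of all functions from a proper initial segment of `κ` to `κ`. -/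
abbrev PreFun (κ : Cardinal.{u}) : Type u := Σ α : K κ, ({β : K κ // β < α} → K κ)

variable (κ : Cardinal.{u})

/-- The restriction `x ↾ α` of a function `x ∈ ^κκ` to the initial segment determined by `α`. -/
def resT (x : K κ → K κ) (α : K κ) : PreFun κ := ⟨α, fun β => x β.1⟩

/-- The restriction of `s ∈ ^{<κ}κ` to (the minimum of its domain and) `γ`.  When
`γ ≤ s.1` this is the restriction `s ↾ γ`; otherwise it equals `s`. -/
def cut (s : PreFun κ) (γ : K κ) : PreFun κ :=
  ⟨min γ s.1, fun β => s.2 ⟨β.1, lt_of_lt_of_le β.2 (min_le_right _ _)⟩⟩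

/-- A subtree of `^{<κ}κ`: a set of elements of `^{<κ}κ` closed under restrictions
to smaller ordinals. -/
def IsSubtree (T : Set (PreFun κ)) : Prop :=
  ∀ s ∈ T, ∀ γ : K κ, γ < s.1 → cut κ s γ ∈ T

/-- The `α`-th level `T(α)` of `T`. -/
def level (T : Set (PreFun κ)) (α : K κ) : Set (PreFun κ) := {s ∈ T | s.1 = α}

/-- The set `[T]` of cofinal branches of `T`, i.e. all `x ∈ ^κκ` all of whose
restrictions lie in `T`. -/
def branches (T : Set (PreFun κ)) : Set (K κ → K κ) := {x | ∀ α : K κ, resT κ x α ∈ T}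

/-- `T` is a `κ`-Kurepa subtree of `^{<κ}κ`: a subtree all of whose levels are nonempty
of cardinality `< κ` and with at least `κ⁺` many cofinal branches. -/
def IsKurepa (T : Set (PreFun κ)) : Prop :=
  IsSubtree κ T ∧ (∀ α : K κ, (level κ T α).Nonempty ∧ #(level κ T α) < κ) ∧
    Order.succ κ ≤ #(branches κ T)

/-- The basic open set `N_s = {x ∈ ^κκ | s ⊆ x}`. -/
def Nbhd (s : PreFun κ) : Set (K κ → K κ) := {x | resT κ x s.1 = s}

/-- The topology of the generalized Baire space `^κκ`, generated by the sets `N_s`. -/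
def baire : TopologicalSpace (K κ → K κ) :=
  TopologicalSpace.generateFrom {U | ∃ s : PreFun κ, U = Nbhd κ s}

/-- `X` is a continuous image of `^κκ`: there is a continuous surjection from `^κκ`
onto `X` (with the subspace topology). -/
def IsContImage (X : Set (K κ → K κ)) : Prop :=
  letI := baire κ
  ∃ f : (K κ → K κ) → X, Continuous f ∧ Function.Surjective f

/-- `X` is a retract of `^κκ`: there is a continuous `r : ^κκ → ^κκ` with range
contained in `X` that is the identity on `X`. -/
def IsRetract (X : Set (K κ → K κ)) : Prop :=
  letI := baire κ
  ∃ r : (K κ → K κ) → (K κ → K κ),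
    Continuous r ∧ Set.range r ⊆ X ∧ ∀ x ∈ X, r x = x

/-- `y` is an isolated point of `Y ⊆ ^κκ`. -/
def IsIsolatedIn (Y : Set (K κ → K κ)) (y : K κ → K κ) : Prop :=
  y ∈ Y ∧ ∃ α : K κ, Nbhd κ (resT κ y α) ∩ Y = {y}

/-- `T` is slim: `|T(α)| ≤ |α|` for all sufficiently large `α < κ`. -/
def IsSlim (T : Set (PreFun κ)) : Prop :=
  ∃ α₀ : K κ, ∀ α : K κ, α₀ ≤ α → #(level κ T α) ≤ #{β : K κ // β < α}

/-- `C ⊆ κ` is closed: it contains every least upper bound of a nonempty subset of `C`. -/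
def ClosedIn (C : Set (K κ)) : Prop :=
  ∀ A ⊆ C, A.Nonempty → ∀ x : K κ, IsLUB A x → x ∈ C

/-- `C ⊆ κ` is unbounded in `κ`. -/
def UnboundedIn (C : Set (K κ)) : Prop := ∀ x : K κ, ∃ y ∈ C, x < y

/-- `S ⊆ κ` is stationary in `κ`: it meets every closed unbounded subset of `κ`. -/
def Stationary (S : Set (K κ)) : Prop :=
  ∀ C : Set (K κ), ClosedIn κ C → UnboundedIn κ C → (S ∩ C).Nonempty

/-- `T` is stationary slim: `|T(α)| ≤ |α|` for stationarily many `α < κ`. -/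
def StatSlim (T : Set (PreFun κ)) : Prop :=
  Stationary κ {α : K κ | #(level κ T α) ≤ #{β : K κ // β < α}}

/-- `α` is a limit ordinal (as an element of `κ`): it is neither the least element
nor a successor. -/
def IsLimitElt (α : K κ) : Prop :=
  (∃ β : K κ, β < α) ∧ ∀ β : K κ, β < α → ∃ γ : K κ, β < γ ∧ γ < α

/-- The boundary `∂T` of a subtree `T`: the minimal elements of `^{<κ}κ \ T`. -/
def boundary (T : Set (PreFun κ)) : Set (PreFun κ) :=
  {t | t ∉ T ∧ ∀ γ : K κ, γ < t.1 → cut κ t γ ∈ T}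

/-- `T` is superthin: for every limit ordinal `α < κ`, the set of elements of
`T ∪ ∂T` with domain `α` has cardinality `< κ`. -/
def IsSuperthin (T : Set (PreFun κ)) : Prop :=
  ∀ α : K κ, IsLimitElt κ α → #{s ∈ T ∪ boundary κ T | s.1 = α} < κ

/-- `T` is pruned: every element of `T` has a proper extension in `T`. -/
def IsPruned (T : Set (PreFun κ)) : Prop :=
  ∀ s ∈ T, ∃ t ∈ T, s.1 < t.1 ∧ cut κ t s.1 = s

/-- `T` is `<κ`-closed: the union of every (strictly increasing with respect to proper
end-extension) sequence of elements of `T` indexed by an ordinal `< κ` again lies in `T`.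
Here `u` is the union of the sequence `s` iff the domain of `u` is the least upper bound
of the domains of the `s ξ` and every `s ξ` is a restriction of `u`. -/
def IsLtClosed (T : Set (PreFun κ)) : Prop :=
  ∀ (γ : K κ) (s : {ξ : K κ // ξ < γ} → PreFun κ),
    (∀ ξ ζ : {ξ : K κ // ξ < γ}, ξ < ζ → (s ξ).1 < (s ζ).1 ∧ cut κ (s ζ) (s ξ).1 = s ξ) →
    (∀ ξ, s ξ ∈ T) →
    ∀ u : PreFun κ, IsLUB (Set.range fun ξ => (s ξ).1) u.1 →
      (∀ ξ, cut κ u (s ξ).1 = s ξ) → u ∈ T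

/-- `T` contains a Cantor subtree. -/
def HasCantorSubtree (T : Set (PreFun κ)) : Prop :=
  ∃ (l : ℕ → K κ) (lam : K κ), StrictMono l ∧ IsLUB (Set.range l) lam ∧
    (level κ T lam).Nonempty ∧
    ∃ B ⊆ level κ T lam, ¬ B.Countable ∧
      ∀ n : ℕ, ((fun t => cut κ t (l n)) '' B).Countable

/-- proper end-extension on `^{<κ}κ`. -/
def pext (s t : PreFun κ) : Prop := s.1 < t.1 ∧ cut κ t s.1 = s

/-- A set `A ⊆ ^{<κ}κ`, regarded as a tree under proper end-extension, is trivially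
coherent: it is order-isomorphic to a subtree of `^{<λ}2` (for `λ` its height) all of
whose elements `t` satisfy that `t⁻¹{0}` is finite.  (Here the comparison tree is
realized as a subtree `U` of `^{<κ}κ` taking only the values `0` and `1`, i.e. values
with at most one predecessor, such that each `u ∈ U` takes the value `0`, i.e. the
value with no predecessor, only finitely often.) -/
def TriviallyCoherent (A : Set (PreFun κ)) : Prop :=
  ∃ U : Set (PreFun κ),
    IsSubtree κ U ∧
    (∀ u ∈ U, ∀ β : {b : K κ // b < u.1}, #{γ : K κ // γ < u.2 β} ≤ 1) ∧
    (∀ u ∈ U, {β : {b : K κ // b < u.1} | ¬ ∃ γ : K κ, γ < u.2 β}.Finite) ∧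
    ∃ f : A → U, Function.Bijective f ∧
      ∀ s t : A, pext κ s.1 t.1 ↔ pext κ (f s).1 (f t).1

/-- `T` is locally coherent: each of its proper initial segments `T ∩ ^{<α}κ` is
trivially coherent. -/
def LocallyCoherent (T : Set (PreFun κ)) : Prop :=
  ∀ α : K κ, TriviallyCoherent κ {s ∈ T | s.1 < α}

end GBaire

/-!
Suppose `F : ^ω₁ω₁ → [T]` is a continuous surjection and call a basic open set `N_s` big when
`F[N_s]` has more than `ℵ₁` points. Under CH there are only `ℵ₁` basic open sets, so the images of
the small ones cover at most `ℵ₁` points, and a point `y` whose image avoids them has only big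
neighbourhoods. Two such points in a big `N_s` with `F y₀ ≠ F y₁` and continuity of `F` split `N_s`
into two big basic subsets whose images are separated at a single coordinate. Iterating gives a
binary Cantor scheme; its countably many separating coordinates lie below some `Λ < ω₁`, and the
`2^ℵ₀` branches of the scheme yield `2^ℵ₀` distinct elements of `T(Λ)`, although `|T(Λ)| < ℵ₁`.
-/

open Topology

namespace GBaire

universe v

attribute [local instance] baire

theorem exists_forall_eqOn_of_eqOn_succ {α β : Type*} {A : ℕ → Set α} (hA : Monotone A)
    {y : ℕ → α → β} (hy : ∀ n, EqOn (y (n + 1)) (y n) (A n)) :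
    ∃ z : α → β, ∀ n, EqOn z (y n) (A n) := by
  classical
  have hmono : ∀ {m n}, m ≤ n → EqOn (y n) (y m) (A m) := by
    intro m n hmn
    induction hmn with
    | refl => exact eqOn_refl _ _
    | step hle ih => exact ((hy _).mono (hA hle)).trans ih
  refine ⟨fun a => if h : ∃ n, a ∈ A n then y h.choose a else y 0 a, fun n a ha => ?_⟩
  have h : ∃ n, a ∈ A n := ⟨n, ha⟩
  simp only [dif_pos h]
  rw [← hmono (le_max_left h.choose n) h.choose_spec, hmono (le_max_right h.choose n) ha]

theorem exists_forall_lt_of_countable {α : Type*} [LinearOrder α] (hα : ℵ₀ < Order.cof α)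
    {s : Set α} (hs : s.Countable) : ∃ x, ∀ y ∈ s, y < x :=
  not_isCofinal_iff.1 fun h =>
    ((Order.cof_le h).trans (Cardinal.mk_le_aleph0_iff.2 hs.to_subtype)).not_gt hα

theorem lt_mk_sdiff {α : Type u} {c : Cardinal.{u}} {A B : Set α} (hc : ℵ₀ ≤ c) (hA : c < #A)
    (hB : #B ≤ c) : c < #(A \ B : Set α) :=
  lt_of_not_ge fun h =>
    hA.not_ge ((Cardinal.le_mk_sdiff_add_mk A B).trans (Cardinal.add_le_of_le hc h hB))

section Baire

variable {κ : Cardinal.{u}}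

theorem resT_eq_resT_iff {y z : K κ → K κ} {γ : K κ} :
    resT κ y γ = resT κ z γ ↔ EqOn y z (Iio γ) := by
  refine ⟨fun h β hβ => ?_, fun h => Sigma.ext rfl (heq_of_eq (funext fun β => h β.2))⟩
  simp only [resT, Sigma.mk.injEq, heq_eq_eq, true_and] at h
  exact congrFun h ⟨β, hβ⟩

theorem mem_Nbhd_resT_iff {y z : K κ → K κ} {γ : K κ} :
    z ∈ Nbhd κ (resT κ y γ) ↔ EqOn z y (Iio γ) :=
  resT_eq_resT_iff

theorem isOpen_Nbhd (s : PreFun κ) : IsOpen (Nbhd κ s) :=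
  TopologicalSpace.isOpen_generateFrom_of_mem ⟨s, rfl⟩

theorem exists_Nbhd_resT_subset {U : Set (K κ → K κ)} (hU : IsOpen U)
    {y : K κ → K κ} (hy : y ∈ U) (β : K κ) : ∃ γ, β ≤ γ ∧ Nbhd κ (resT κ y γ) ⊆ U := by
  induction hU generalizing y β with
  | basic _ h =>
    obtain ⟨s, rfl⟩ := h
    refine ⟨max β s.1, le_max_left _ _, fun z hz => ?_⟩
    have hzs : EqOn z y (Iio s.1) :=
      (mem_Nbhd_resT_iff.1 hz).mono (Iio_subset_Iio (le_max_right _ _))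
    exact (resT_eq_resT_iff.2 hzs).trans hy
  | univ => exact ⟨β, le_rfl, subset_univ _⟩
  | inter U V _ _ ihU ihV =>
    obtain ⟨γ, hβγ, hγU⟩ := ihU hy.1 β
    obtain ⟨δ, hγδ, hδV⟩ := ihV hy.2 γ
    refine ⟨δ, hβγ.trans hγδ, subset_inter (fun z hz => hγU ?_) hδV⟩
    exact mem_Nbhd_resT_iff.2 ((mem_Nbhd_resT_iff.1 hz).mono (Iio_subset_Iio hγδ))
  | sUnion S _ ih =>
    obtain ⟨U, hUS, hyU⟩ := hy
    obtain ⟨γ, hβγ, hγU⟩ := ih U hUS hyU β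
    exact ⟨γ, hβγ, hγU.trans (subset_sUnion_of_mem hUS)⟩

def IsBig (F : (K κ → K κ) → K κ → K κ) (s : PreFun κ) : Prop :=
  κ < #(F '' Nbhd κ s)

def smallImage (F : (K κ → K κ) → K κ → K κ) : Set (K κ → K κ) :=
  ⋃ s ∈ {s | ¬ IsBig F s}, F '' Nbhd κ s

variable {F : (K κ → K κ) → K κ → K κ}

theorem mk_smallImage_le (hκ : ℵ₀ ≤ κ) (hpre : #(PreFun κ) ≤ κ) : #(smallImage F) ≤ κ :=
  calc #(smallImage F) ≤ #{s | ¬ IsBig F s} * ⨆ s : {s | ¬ IsBig F s}, #(F '' Nbhd κ s.1) :=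
        Cardinal.mk_biUnion_le _ _
    _ ≤ κ * κ :=
        mul_le_mul' ((Cardinal.mk_set_le _).trans hpre) (ciSup_le' fun s => not_lt.1 s.2)
    _ = κ := Cardinal.mul_eq_self hκ

theorem isBig_resT {y : K κ → K κ} (hy : F y ∉ smallImage F) (γ : K κ) :
    IsBig F (resT κ y γ) := by
  by_contra h
  exact hy (mem_biUnion h ⟨y, rfl, rfl⟩)

theorem exists_isBig_forall_apply_eq [NoMaxOrder (K κ)] (hF : Continuous F)
    {y : K κ → K κ} (hy : F y ∉ smallImage F) (γ α : K κ) :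
    ∃ δ, γ ≤ δ ∧ IsBig F (resT κ y δ) ∧ ∀ z ∈ Nbhd κ (resT κ y δ), F z α = F y α := by
  obtain ⟨ε, hαε⟩ := exists_gt α
  obtain ⟨δ, hγδ, hδ⟩ := exists_Nbhd_resT_subset ((isOpen_Nbhd _).preimage hF)
    (mem_Nbhd_resT_iff.2 (eqOn_refl (F y) (Iio ε))) γ
  exact ⟨δ, hγδ, isBig_resT hy δ, fun z hz => mem_Nbhd_resT_iff.1 (hδ hz) hαε⟩

theorem exists_isBig_split [NoMaxOrder (K κ)] (hκ : ℵ₀ ≤ κ) (hpre : #(PreFun κ) ≤ κ)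
    (hF : Continuous F) {y : K κ → K κ} {γ : K κ} (hy : IsBig F (resT κ y γ)) :
    ∃ (c : Bool → (K κ → K κ) × K κ) (α : K κ) (v : Bool → K κ), Function.Injective v ∧
      ∀ b, γ ≤ (c b).2 ∧ EqOn (c b).1 y (Iio γ) ∧ IsBig F (resT κ (c b).1 (c b).2) ∧
        ∀ z ∈ Nbhd κ (resT κ (c b).1 (c b).2), F z α = v b := by
  have hlarge := lt_mk_sdiff hκ hy (mk_smallImage_le (F := F) hκ hpre)
  obtain ⟨e⟩ : Nonempty (Bool ↪ ↥(F '' Nbhd κ (resT κ y γ) \ smallImage F)) := by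
    rw [← Cardinal.lift_mk_le']
    simpa using ((Cardinal.natCast_lt_aleph0 (n := 2)).le.trans hκ).trans hlarge.le
  choose w hw hFw using fun b => (e b).2.1
  obtain ⟨α, hα⟩ :=
    Function.ne_iff.1 (Subtype.val_injective.ne (e.injective.ne Bool.false_ne_true))
  choose δ hγδ hbig hδ using fun b => exists_isBig_forall_apply_eq hF (hFw b ▸ (e b).2.2) γ α
  refine ⟨fun b => (w b, δ b), α, fun b => F (w b) α, Bool.injective_iff.2 ?_,
    fun b => ⟨hγδ b, mem_Nbhd_resT_iff.1 (hw b), hbig b, hδ b⟩⟩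
  simpa only [hFw] using hα

/-- `node l = (y, γ)` stands for the basic open set `N_{y↾γ}`; the children of `l` are
`l ++ [false]` and `l ++ [true]`, whose images under `F` differ at coordinate `α l`. -/
theorem exists_cantor_scheme (hcof : ℵ₀ < Order.cof (K κ)) (hpre : #(PreFun κ) ≤ κ)
    (hF : Continuous F) (hrange : κ < #(range F)) :
    ∃ (node : List Bool → (K κ → K κ) × K κ) (α : List Bool → K κ),
      (∀ l b, (node l).2 ≤ (node (l ++ [b])).2 ∧
        EqOn (node (l ++ [b])).1 (node l).1 (Iio (node l).2)) ∧
      ∀ l b b', b ≠ b' → ∀ z ∈ Nbhd κ (resT κ (node (l ++ [b])).1 (node (l ++ [b])).2),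
        ∀ z' ∈ Nbhd κ (resT κ (node (l ++ [b'])).1 (node (l ++ [b'])).2),
          F z (α l) ≠ F z' (α l) := by
  have hκ : ℵ₀ ≤ κ :=
    hcof.le.trans ((Order.cof_le_cardinalMk _).trans_eq (Cardinal.mk_ord_toType κ))
  have := Cardinal.noMaxOrder hκ
  obtain ⟨γ₀⟩ : Nonempty (K κ) := Order.cof_ne_zero_iff.1 (aleph0_pos.trans hcof).ne'
  have hlarge := lt_mk_sdiff hκ hrange (mk_smallImage_le (F := F) hκ hpre)
  obtain ⟨_, ⟨y₀, rfl⟩, hy₀⟩ :=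
    Cardinal.mk_ne_zero_iff.1 ((aleph0_pos.trans_le hκ).trans hlarge).ne'
  choose c α v hv hc using
    fun p : {p : (K κ → K κ) × K κ // IsBig F (resT κ p.1 p.2)} => exists_isBig_split hκ hpre hF p.2
  let node : List Bool → {p : (K κ → K κ) × K κ // IsBig F (resT κ p.1 p.2)} :=
    List.foldl (fun p b => ⟨c p b, (hc p b).2.2.1⟩) ⟨(y₀, γ₀), isBig_resT hy₀ γ₀⟩
  refine ⟨fun l => (node l).1, fun l => α (node l), fun l b => ?_,
    fun l b b' hbb' z hz z' hz' => ?_⟩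
  · simp only [node, List.foldl_concat]
    exact ⟨(hc _ b).1, (hc _ b).2.1⟩
  · simp only [node, List.foldl_concat] at hz hz' ⊢
    rw [(hc _ b).2.2.2 z hz, (hc _ b').2.2.2 z' hz']
    exact (hv _).ne hbb'

theorem exists_injective_resT (hcof : ℵ₀ < Order.cof (K κ)) (hpre : #(PreFun κ) ≤ κ)
    (hF : Continuous F) (hrange : κ < #(range F)) :
    ∃ (Λ : K κ) (g : (ℕ → Bool) → K κ → K κ),
      Function.Injective fun x => resT κ (F (g x)) Λ := by
  obtain ⟨node, α, hext, hsep⟩ := exists_cantor_scheme hcof hpre hF hrange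
  obtain ⟨Λ, hΛ⟩ := exists_forall_lt_of_countable hcof (countable_range α)
  let path (x : ℕ → Bool) (n : ℕ) : List Bool := List.ofFn fun i : Fin n => x i
  have path_succ : ∀ x n, path x (n + 1) = path x n ++ [x n] :=
    fun x n => (List.ofFn_succ' _).trans (List.concat_eq_append ..)
  have hbranch : ∀ x, ∃ z, ∀ n, EqOn z (node (path x n)).1 (Iio (node (path x n)).2) := by
    intro x
    refine exists_forall_eqOn_of_eqOn_succ (monotone_nat_of_le_succ fun n => ?_) fun n => ?_
    · rw [path_succ]
      exact Iio_subset_Iio (hext _ _).1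
    · rw [path_succ]
      exact (hext _ _).2
  choose g hg using hbranch
  have hmem : ∀ x n,
      g x ∈ Nbhd κ (resT κ (node (path x n ++ [x n])).1 (node (path x n ++ [x n])).2) :=
    fun x n => mem_Nbhd_resT_iff.2 (path_succ x n ▸ hg x (n + 1))
  refine ⟨Λ, g, fun x x' hxx' => by_contra fun hne => ?_⟩
  have hd : ∃ n, x n ≠ x' n := Function.ne_iff.1 hne
  have hpath : path x (Nat.find hd) = path x' (Nat.find hd) :=
    congrArg List.ofFn (funext fun i => not_not.1 (Nat.find_min hd i.2))
  refine hsep _ _ _ (Nat.find_spec hd) _ (hmem x _) _ (hpath ▸ hmem x' _) ?_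
  exact resT_eq_resT_iff.1 hxx' (hΛ _ ⟨_, rfl⟩)

theorem mk_preFun_le (hκ : ℵ₀ ≤ κ) (hpow : ∀ α : K κ, κ ^ #{β : K κ // β < α} ≤ κ) :
    #(PreFun κ) ≤ κ :=
  calc #(PreFun κ) = Cardinal.sum fun α : K κ => κ ^ #{β : K κ // β < α} := by
        simp only [PreFun, Cardinal.mk_sigma, ← Cardinal.power_def, Cardinal.mk_ord_toType]
    _ ≤ #(K κ) * ⨆ α : K κ, κ ^ #{β : K κ // β < α} := Cardinal.sum_le_mk_mul_iSup _
    _ ≤ κ * κ := mul_le_mul' (Cardinal.mk_ord_toType κ).le (ciSup_le' hpow)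
    _ = κ := Cardinal.mul_eq_self hκ

end Baire

theorem aleph_one_power_le_of_CH (hCH : (2 : Cardinal.{u}) ^ ℵ₀ = aleph 1) {c : Cardinal.{v}}
    (hc : c < aleph 1) : aleph 1 ^ c ≤ aleph 1 :=
  have hCH : (2 : Cardinal.{v}) ^ ℵ₀ = aleph 1 := by
    rw [← Cardinal.lift_inj.{v, u}]
    simpa using congrArg Cardinal.lift.{v} hCH
  calc aleph 1 ^ c ≤ aleph 1 ^ ℵ₀ :=
        Cardinal.power_le_power_left (aleph_pos 1).ne'
          (Order.lt_succ_iff.1 (Cardinal.succ_aleph0 ▸ hc))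
    _ = aleph 1 := by rw [← hCH, ← Cardinal.power_mul, Cardinal.aleph0_mul_aleph0]

/-- Assume `CH`.  If `T` is an `ω₁`-Kurepa subtree of `^{<ω₁}ω₁`,
then `[T]` is not a continuous image of `^{ω₁}ω₁`. -/
theorem kurepa_not_continuous_image_of_CH
    (hCH : (2 : Cardinal.{u}) ^ ℵ₀ = aleph 1)
    (T : Set (PreFun (aleph 1))) (hT : IsKurepa (aleph 1) T) :
    ¬ IsContImage (aleph 1) (branches (aleph 1) T) := by
  rintro ⟨f, hf, hsurj⟩
  obtain ⟨-, hlevel, hbranches⟩ := hT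
  have hrange : range (Subtype.val ∘ f) = branches (aleph 1) T := by
    rw [range_comp, hsurj.range_eq, image_univ, Subtype.range_coe]
  have hcof : ℵ₀ < Order.cof (K (aleph 1)) := by
    rw [Ordinal.cof_toType, Cardinal.isRegular_aleph_one.cof_ord]
    exact Cardinal.aleph0_lt_aleph_one
  have hpre : #(PreFun (aleph 1)) ≤ aleph 1 :=
    mk_preFun_le (Cardinal.aleph0_le_aleph 1)
      fun α => aleph_one_power_le_of_CH hCH (by simpa using Cardinal.mk_Iio_lt α)
  obtain ⟨Λ, g, hg⟩ := exists_injective_resT hcof hpre (continuous_subtype_val.comp hf)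
    (by rw [hrange]; exact Order.succ_le_iff.1 hbranches)
  have hcont : 𝔠 ≤ #(level (aleph 1) T Λ) := by
    simpa using Cardinal.lift_mk_le_lift_mk_of_injective
      (f := fun x => (⟨_, (f (g x)).2 Λ, rfl⟩ : level (aleph 1) T Λ))
      fun x x' h => hg (congrArg Subtype.val h)
  exact ((hlevel Λ).2.trans_le Cardinal.aleph_one_le_continuum).not_ge hcont

end GBaire
end
end

section
/- Let κ be an uncountable regular cardinal and let p : κ × κ → κ be a bijection. For x ∈ ^κ2 let <_x be the binary relation on κ defined by: α <_x β if and only if x(p(α, β)) = 1. Then the set W = {x ∈ ^κ2 : <_x is a well-ordering of κ} is a closed subset of the generalized Baire space ^κκ. -/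
open Cardinal Set

noncomputable section

/-!
A code `x` lies outside `W` for a reason visible on countably many coordinates: a value other
than `0, 1`, the two codes `p (a, b)`, `p (b, a)` of a pair violating trichotomy, or the codes
`p (f (n + 1), f n)` of the steps of a descending chain `f`. Since `cof κ > ω`, these coordinates
all lie below some `α < κ`, so the basic neighbourhood of `x ↾ α` misses `W`.
-/

theorem exists_countable_eqOn_not_isWellOrder {α : Type*} {r : α → α → Prop}
    (h : ¬ IsWellOrder α r) :
    ∃ S : Set (α × α), S.Countable ∧
      ∀ r' : α → α → Prop, EqOn (Function.uncurry r') (Function.uncurry r) S →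
        ¬ IsWellOrder α r' := by
  by_cases htri : Std.Trichotomous r
  · have hwf : ¬ WellFounded r := fun hwf => h { wf := hwf }
    obtain ⟨f, hf⟩ := not_isEmpty_iff.1 (mt wellFounded_iff_isEmpty_descending_chain.2 hwf)
    refine ⟨range fun n => (f (n + 1), f n), countable_range _, fun r' hr' hwo => ?_⟩
    refine (wellFounded_iff_isEmpty_descending_chain.1 hwo.wf).false ⟨f, fun n => ?_⟩
    exact Eq.mpr (hr' (mem_range_self n)) (hf n)
  · obtain ⟨a, b, hab, hba, hne⟩ : ∃ a b, ¬ r a b ∧ ¬ r b a ∧ a ≠ b := by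
      by_contra! hcon
      exact htri ⟨hcon⟩
    refine ⟨{(a, b), (b, a)}, (toFinite _).countable, fun r' hr' hwo => ?_⟩
    have hab' : r' a b = r a b := hr' (mem_insert _ _)
    have hba' : r' b a = r b a := hr' (mem_insert_of_mem _ rfl)
    rcases trichotomous_of r' a b with h | h | h
    · exact hab (hab' ▸ h)
    · exact hne h
    · exact hba (hba' ▸ h)

theorem exists_forall_lt_of_countable {α : Type*} [LinearOrder α] (hα : ℵ₀ < Order.cof α)
    {s : Set α} (hs : s.Countable) : ∃ a, ∀ b ∈ s, b < a :=
  not_isCofinal_iff.1 fun hcof =>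
    (Order.cof_le hcof).trans (le_aleph0_iff_set_countable.2 hs) |>.not_gt hα

namespace GBaire

universe u

variable {κ : Cardinal.{u}}

theorem mem_nbhd_resT_iff {x y : K κ → K κ} {α : K κ} :
    y ∈ Nbhd κ (resT κ x α) ↔ ∀ β < α, y β = x β := by
  refine ⟨fun h β hβ => congrFun (eq_of_heq (Sigma.ext_iff.1 h).2) ⟨β, hβ⟩, fun h => ?_⟩
  exact Sigma.ext rfl (heq_of_eq (funext fun β => h β.1 β.2))

theorem isOpen_of_forall_exists_countable_eqOn (hκ : ℵ₀ < κ.ord.cof) {U : Set (K κ → K κ)}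
    (hU : ∀ x ∈ U, ∃ S : Set (K κ), S.Countable ∧ ∀ y, EqOn y x S → y ∈ U) :
    @IsOpen _ (baire κ) U := by
  let := baire κ
  refine isOpen_iff_forall_mem_open.2 fun x hx => ?_
  obtain ⟨S, hS, hSU⟩ := hU x hx
  obtain ⟨α, hα⟩ := exists_forall_lt_of_countable (by rwa [Ordinal.cof_toType]) hS
  refine ⟨Nbhd κ (resT κ x α), fun y hy => hSU y fun β hβ => ?_,
    TopologicalSpace.isOpen_generateFrom_of_mem ⟨_, rfl⟩, mem_nbhd_resT_iff.2 fun _ _ => rfl⟩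
  exact mem_nbhd_resT_iff.1 hy β (hα β hβ)

theorem wellorder_codes_closed_general
    (κ : Cardinal.{u}) (hκ : ℵ₀ < κ) (hreg : κ.IsRegular)
    (p : K κ × K κ → K κ)
    (one : K κ) :
    @IsClosed _ (baire κ)
      {x : K κ → K κ |
        (∀ α : K κ, #{γ : K κ // γ < x α} ≤ 1) ∧
        IsWellOrder (K κ) (fun α β => x (p (α, β)) = one)} := by
  let := baire κ
  refine isOpen_compl_iff.1 (isOpen_of_forall_exists_countable_eqOn (by rwa [hreg.cof_ord]) ?_)
  intro x hx
  by_cases hbin : ∀ α : K κ, #{γ : K κ // γ < x α} ≤ 1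
  · obtain ⟨S, hS, hSW⟩ := exists_countable_eqOn_not_isWellOrder fun hwo => hx ⟨hbin, hwo⟩
    refine ⟨p '' S, hS.image p, fun y hy hyW => hSW _ (fun q hq => ?_) hyW.2⟩
    exact congrArg (· = one) (hy (mem_image_of_mem p hq))
  · obtain ⟨α, hα⟩ := not_forall.1 hbin
    exact ⟨{α}, countable_singleton α, fun y hy hyW => hα (hy rfl ▸ hyW.1 α)⟩

/-- Let `κ` be an uncountable regular cardinal, let `p : κ × κ → κ` be
a bijection and let `one` be the element `1` of `κ` (the unique element with exactly one
predecessor).  Then the set `W` of all binary-valued `x ∈ ^κ2 ⊆ ^κκ` such that the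
relation `α <_x β ↔ x (p (α, β)) = 1` is a well-ordering of `κ` is closed in `^κκ`. -/
theorem wellorder_codes_closed
    (κ : Cardinal.{u}) (hκ : ℵ₀ < κ) (hreg : κ.IsRegular)
    (p : K κ × K κ → K κ) (hp : Function.Bijective p)
    (one : K κ) (hone : #{γ : K κ // γ < one} = 1) :
    @IsClosed _ (baire κ)
      {x : K κ → K κ |
        (∀ α : K κ, #{γ : K κ // γ < x α} ≤ 1) ∧
        IsWellOrder (K κ) (fun α β => x (p (α, β)) = one)} :=
  wellorder_codes_closed_general κ hκ hreg p one

end GBaire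
end
end

section
/- Let κ be an uncountable regular cardinal and let T be a subtree of ^{<κ}κ such that the cardinality of [T] is strictly greater than κ^{<κ}. If [T] is a continuous image of ^κκ, then T contains a Cantor subtree. -/
open Cardinal Set

noncomputable section

/-!
Let `F : ^κκ → [T]` be a continuous surjection and call a basic open set `N_s` small when
`|F[N_s]| ≤ κ^{<κ}`. The union `G` of the images of all small sets has size at most
`κ^{<κ} < |[T]|`, so some `F x` lies outside `G`; then no `N_{x↾β}` is small, and it contains
two points whose images are distinct and again outside `G`. Iterating this splitting along the
binary tree, with continuity pinning the images of whole neighbourhoods below common levels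
`l₀ < l₁ < ⋯`, yields points `y_b` (`b ∈ 2^ω`) whose images are pairwise separated below some
`l_n` while only finitely many restrictions `F(y_b)↾l_n` occur. As `cf κ > ω`, `λ = sup l_n < κ`,
and the restrictions `F(y_b)↾λ` form the required uncountable subset of `T(λ)`.
-/

theorem exists_seq_of_exists_succ {α : ℕ → Type*} {P : ∀ n, α n → Prop}
    {R : ∀ n, α n → α (n + 1) → Prop} (h₀ : ∃ a, P 0 a)
    (h : ∀ n a, P n a → ∃ b, P (n + 1) b ∧ R n a b) :
    ∃ f : ∀ n, α n, ∀ n, P n (f n) ∧ R n (f n) (f (n + 1)) := by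
  obtain ⟨a₀, ha₀⟩ := h₀
  choose g hg using h
  let f : ∀ n, {a : α n // P n a} := fun n =>
    Nat.rec ⟨a₀, ha₀⟩ (fun n a => ⟨g n a.1 a.2, (hg n a.1 a.2).1⟩) n
  exact ⟨fun n => (f n).1, fun n => ⟨(f n).2, (hg n _ (f n).2).2⟩⟩

namespace GBaire

open Topology

variable {κ : Cardinal.{u}}

theorem resT_eq_resT_iff_s6 {x y : K κ → K κ} {α : K κ} :
    resT κ x α = resT κ y α ↔ ∀ c < α, x c = y c := by
  simp only [resT, sigma_mk_injective.eq_iff, funext_iff, Subtype.forall]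

theorem resT_eq_resT_of_le {x y : K κ → K κ} {α β : K κ} (hβ : β ≤ α)
    (h : resT κ x α = resT κ y α) : resT κ x β = resT κ y β :=
  resT_eq_resT_iff_s6.2 fun c hc => resT_eq_resT_iff_s6.1 h c (hc.trans_le hβ)

theorem cut_resT {x : K κ → K κ} {α β : K κ} (h : β ≤ α) :
    cut κ (resT κ x α) β = resT κ x β := by
  refine Sigma.ext (min_eq_left h)
    (Function.hfunext (by simp [cut, resT, h]) fun a a' ha => ?_)
  rw [Subtype.heq_iff_coe_eq fun c => by simp [cut, resT, h]] at ha
  exact heq_of_eq (congrArg x ha)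

theorem nhds_baire_hasBasis [Nonempty (K κ)] (x : K κ → K κ) :
    (@nhds _ (baire κ) x).HasBasis (fun _ => True) fun α => Nbhd κ (resT κ x α) := by
  have hdir : Directed (· ≥ ·) fun α => Nbhd κ (resT κ x α) := fun α β =>
    ⟨max α β, fun _ hy => resT_eq_resT_of_le (le_max_left α β) hy,
      fun _ hy => resT_eq_resT_of_le (le_max_right α β) hy⟩
  convert Filter.hasBasis_iInf_principal hdir using 1
  rw [baire, TopologicalSpace.nhds_generateFrom]
  refine le_antisymm (le_iInf fun α => iInf₂_le _ ⟨rfl, _, rfl⟩) (le_iInf₂ ?_)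
  rintro _ ⟨hxU, s, rfl⟩
  rw [show s = resT κ x s.1 from hxU.symm]
  exact iInf_le _ _

theorem exists_resT_eq_of_continuous [Nonempty (K κ)] {g : (K κ → K κ) → K κ → K κ}
    (hg : Continuous[baire κ, baire κ] g) (x : K κ → K κ) (α : K κ) :
    ∃ β, ∀ y, resT κ y β = resT κ x β → resT κ (g y) α = resT κ (g x) α := by
  let := baire κ
  obtain ⟨β, -, hβ⟩ :=
    ((nhds_baire_hasBasis x).tendsto_iff (nhds_baire_hasBasis (g x))).1 (hg.tendsto x) α trivial
  exact ⟨β, hβ⟩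

theorem bddAbove_range_of_aleph0_lt_cof (h : ℵ₀ < κ.ord.cof) (g : ℕ → K κ) :
    BddAbove (range g) := by
  have : NoMaxOrder (K κ) := noMaxOrder (h.le.trans (Ordinal.cof_ord_le κ))
  by_contra hg
  have hcof := Order.cof_le (not_bddAbove_iff_isCofinal.1 hg)
  rw [Ordinal.cof_toType] at hcof
  exact h.not_ge (hcof.trans (Cardinal.mk_le_aleph0_iff.2 (countable_range g).to_subtype))

theorem exists_isLUB_of_bddAbove {s : Set (K κ)} (hs : BddAbove s) : ∃ a, IsLUB s a :=
  ⟨wellFounded_lt.min _ hs, wellFounded_lt.min_mem _ hs, fun _ hb => wellFounded_lt.min_le hb⟩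

theorem nonempty_K (hκ : ℵ₀ ≤ κ) : Nonempty (K κ) := by
  simpa using (aleph0_pos.trans_le hκ).ne'

theorem aleph0_le_mk_preFun (hκ : ℵ₀ ≤ κ) : ℵ₀ ≤ #(PreFun κ) :=
  calc ℵ₀ ≤ κ := hκ
    _ = #(K κ) := by rw [mk_toType, card_ord]
    _ ≤ #(PreFun κ) :=
      mk_le_of_injective (f := fun α : K κ => (⟨α, fun β => β.1⟩ : PreFun κ))
        fun _ _ h => congrArg Sigma.fst h

section SmallPart

variable {Y : Type u} (F : (K κ → K κ) → Y)

def smallPart : Set Y :=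
  ⋃ s ∈ {s : PreFun κ | #(F '' Nbhd κ s) ≤ #(PreFun κ)}, F '' Nbhd κ s

variable {F}

theorem mk_smallPart_le (hκ : ℵ₀ ≤ κ) : #(smallPart F) ≤ #(PreFun κ) :=
  calc #(smallPart F) ≤ #(PreFun κ) * #(PreFun κ) :=
        (mk_biUnion_le _ _).trans (mul_le_mul' (mk_subtype_le _) (ciSup_le' fun s => s.2))
    _ = #(PreFun κ) := mul_eq_self (aleph0_le_mk_preFun hκ)

theorem exists_notMem_smallPart (hκ : ℵ₀ ≤ κ) (hF : #(PreFun κ) < #(range F)) :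
    ∃ x, F x ∉ smallPart F := by
  by_contra! h
  exact (mk_le_mk_of_subset (range_subset_iff.2 h) |>.trans (mk_smallPart_le hκ)).not_gt hF

theorem exists_split_of_notMem_smallPart (hκ : ℵ₀ ≤ κ) {x : K κ → K κ}
    (hx : F x ∉ smallPart F) (β : K κ) :
    ∃ X : Bool → K κ → K κ, (∀ i, resT κ (X i) β = resT κ x β) ∧
      (∀ i, F (X i) ∉ smallPart F) ∧ F (X false) ≠ F (X true) := by
  set A := F '' Nbhd κ (resT κ x β)
  have hA : #(PreFun κ) < #A := by
    by_contra! hA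
    exact hx (mem_biUnion hA ⟨x, rfl, rfl⟩)
  have hdiff : #(PreFun κ) < #(A \ smallPart F : Set Y) := by
    by_contra! hle
    refine hA.not_ge ((mk_le_mk_of_subset (subset_sdiff_union A (smallPart F))).trans ?_)
    calc #(A \ smallPart F ∪ smallPart F : Set Y)
        ≤ #(PreFun κ) + #(PreFun κ) :=
          (mk_union_le _ _).trans (add_le_add hle (mk_smallPart_le hκ))
      _ = #(PreFun κ) := add_eq_self (aleph0_le_mk_preFun hκ)
  obtain ⟨⟨_, ⟨x₀, hx₀, rfl⟩, h₀⟩, ⟨_, ⟨x₁, hx₁, rfl⟩, h₁⟩, hne⟩ := two_le_iff.1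
    (natCast_lt_aleph0.le.trans ((aleph0_le_mk_preFun hκ).trans hdiff.le))
  refine ⟨fun i => bif i then x₁ else x₀, Bool.forall_bool.2 ⟨hx₀, hx₁⟩,
    Bool.forall_bool.2 ⟨h₀, h₁⟩, fun h => hne (Subtype.ext h)⟩

end SmallPart

theorem exists_forall_resT_eq_of_chain {x : ℕ → K κ → K κ} {β : ℕ → K κ} (hβ : Monotone β)
    (hx : ∀ n, resT κ (x (n + 1)) (β n) = resT κ (x n) (β n)) :
    ∃ y, ∀ n, resT κ y (β n) = resT κ (x n) (β n) := by
  have hchain : ∀ n m, n ≤ m → resT κ (x m) (β n) = resT κ (x n) (β n) := by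
    intro n m hnm
    induction m, hnm using Nat.le_induction with
    | base => rfl
    | succ m hnm ih => exact (resT_eq_resT_of_le (hβ hnm) (hx m)).trans ih
  classical
  refine ⟨fun c => if h : ∃ n, c < β n then x h.choose c else x 0 c,
    fun n => resT_eq_resT_iff_s6.2 fun c hc => ?_⟩
  have h : ∃ n, c < β n := ⟨n, hc⟩
  rw [dif_pos h]
  rcases le_total h.choose n with hle | hle
  · exact (resT_eq_resT_iff_s6.1 (hchain _ _ hle) c h.choose_spec).symm
  · exact resT_eq_resT_iff_s6.1 (hchain _ _ hle) c hc

variable (κ) in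
/-- Stage `n` of the splitting construction: a point `pt v` and a length `len v` for every node
`v` of height `n` of the binary tree, and a level `lvl` below which all images under `F` of
points of `N_{pt v ↾ len v}` agree (see `Stage.Refines.resT_image`). -/
structure Stage (n : ℕ) where
  pt : (Fin n → Bool) → K κ → K κ
  len : (Fin n → Bool) → K κ
  lvl : K κ

namespace Stage

variable (F : (K κ → K κ) → K κ → K κ) {n : ℕ}

def Good (d : Stage κ n) : Prop := ∀ v, F (d.pt v) ∉ smallPart F

structure Refines (d : Stage κ n) (e : Stage κ (n + 1)) : Prop where
  len_le : ∀ w, d.len (Fin.init w) ≤ e.len w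
  resT_pt : ∀ w,
    resT κ (e.pt w) (d.len (Fin.init w)) = resT κ (d.pt (Fin.init w)) (d.len (Fin.init w))
  lvl_lt : d.lvl < e.lvl
  resT_image : ∀ w y, resT κ y (e.len w) = resT κ (e.pt w) (e.len w) →
    resT κ (F y) e.lvl = resT κ (F (e.pt w)) e.lvl
  separates : ∀ w w', Fin.init w = Fin.init w' → w ≠ w' →
    resT κ (F (e.pt w)) e.lvl ≠ resT κ (F (e.pt w')) e.lvl

variable {F}

theorem exists_refines (hκ : ℵ₀ ≤ κ) (hF : Continuous[baire κ, baire κ] F) {d : Stage κ n}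
    (hd : d.Good F) : ∃ e : Stage κ (n + 1), e.Good F ∧ d.Refines F e := by
  have : NoMaxOrder (K κ) := noMaxOrder hκ
  have : Nonempty (K κ) := ⟨d.lvl⟩
  choose X hX hXgood hXne using fun v => exists_split_of_notMem_smallPart hκ (hd v) (d.len v)
  choose δ hδ using fun v => Function.ne_iff.1 (hXne v)
  obtain ⟨α, hα⟩ := ((finite_range δ).insert d.lvl).bddAbove
  obtain ⟨α', hα'⟩ := exists_gt α
  have hδα' : ∀ v, δ v < α' := fun v => (hα (mem_insert_of_mem _ ⟨v, rfl⟩)).trans_lt hα'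
  let pt : (Fin (n + 1) → Bool) → K κ → K κ := fun w => X (Fin.init w) (w (Fin.last n))
  choose γ hγ using fun w => exists_resT_eq_of_continuous hF (pt w) α'
  refine ⟨⟨pt, fun w => max (d.len (Fin.init w)) (γ w), α'⟩, fun w => hXgood _ _,
    fun w => le_max_left _ _, fun w => hX _ _, (hα (mem_insert _ _)).trans_lt hα',
    fun w y hy => hγ w y (resT_eq_resT_of_le (le_max_right _ _) hy), ?_⟩
  intro w w' hinit hne heq
  have hlast : w (Fin.last n) ≠ w' (Fin.last n) := fun h => hne <| by
    rw [← Fin.snoc_init_self w, ← Fin.snoc_init_self w', hinit, h]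
  have hδw := resT_eq_resT_iff_s6.1 heq _ (hδα' (Fin.init w))
  simp only [pt, ← hinit] at hδw
  exact (Bool.injective_iff (f := fun i => F (X (Fin.init w) i) (δ (Fin.init w)))).2
    (hδ _) |>.ne hlast hδw

end Stage

theorem exists_cantor_scheme_s6 (hκ : ℵ₀ ≤ κ) {F : (K κ → K κ) → K κ → K κ}
    (hF : Continuous[baire κ, baire κ] F) {x₀ : K κ → K κ} (hx₀ : F x₀ ∉ smallPart F) :
    ∃ (l : ℕ → K κ) (y : (ℕ → Bool) → K κ → K κ), StrictMono l ∧
      (∀ n, (range fun b => resT κ (F (y b)) (l n)).Finite) ∧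
      ∀ b b', (∀ n, resT κ (F (y b)) (l n) = resT κ (F (y b')) (l n)) → b = b' := by
  have ⟨a⟩ := nonempty_K hκ
  obtain ⟨S, hS⟩ := exists_seq_of_exists_succ (P := fun n (d : Stage κ n) => d.Good F)
    (R := fun _ d e => d.Refines F e) ⟨⟨fun _ => x₀, fun _ => a, a⟩, fun _ => hx₀⟩
    fun _ _ hd => Stage.exists_refines hκ hF hd
  choose y hy using fun b : ℕ → Bool =>
    exists_forall_resT_eq_of_chain (x := fun n => (S n).pt fun i => b i)
      (β := fun n => (S n).len fun i => b i)
      (monotone_nat_of_le_succ fun n => (hS n).2.len_le fun i : Fin (n + 1) => b i)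
      fun n => (hS n).2.resT_pt fun i : Fin (n + 1) => b i
  have hFy : ∀ b n, resT κ (F (y b)) (S (n + 1)).lvl =
      resT κ (F ((S (n + 1)).pt fun i => b i)) (S (n + 1)).lvl :=
    fun b n => (hS n).2.resT_image _ _ (hy b (n + 1))
  refine ⟨fun n => (S (n + 1)).lvl, y, strictMono_nat_of_lt_succ fun n => (hS (n + 1)).2.lvl_lt,
    fun n => (finite_range fun w => resT κ (F ((S (n + 1)).pt w)) (S (n + 1)).lvl).subset
      (range_subset_iff.2 fun b => ⟨_, (hFy b n).symm⟩),
    fun b b' h => ?_⟩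
  have hprefix : ∀ n, (fun i : Fin n => b i) = fun i : Fin n => b' i := by
    intro n
    induction n with
    | zero => exact Subsingleton.elim _ _
    | succ n ih =>
      by_contra hne
      refine (hS n).2.separates (fun i => b i) (fun i => b' i) ih hne ?_
      rw [← hFy, ← hFy]
      exact h n
  exact funext fun i => congrFun (hprefix (i + 1)) (Fin.last i)

theorem hasCantorSubtree_of_injective {T : Set (PreFun κ)} {l : ℕ → K κ} {lam : K κ}
    (hl : StrictMono l) (hlam : IsLUB (range l) lam) {Φ : (ℕ → Bool) → PreFun κ}
    (hΦ : Function.Injective Φ) (hT : ∀ b, Φ b ∈ level κ T lam)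
    (hcut : ∀ n, (range fun b => cut κ (Φ b) (l n)).Countable) : HasCantorSubtree κ T := by
  refine ⟨l, lam, hl, hlam, ⟨_, hT fun _ => false⟩, range Φ, range_subset_iff.2 hT,
    fun h => ?_, fun n => by rw [← range_comp]; exact hcut n⟩
  have : Countable (ℕ → Bool) :=
    countable_univ_iff.1 ((mapsTo_range Φ univ).countable_of_injOn hΦ.injOn h)
  rw [← Cardinal.mk_le_aleph0_iff] at this
  simpa using this.trans_lt aleph0_lt_continuum

theorem hasCantorSubtree_of_continuous_image_general
    (κ : Cardinal.{u}) (hκ : ℵ₀ < κ) (hreg : κ.IsRegular)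
    (T : Set (PreFun κ))
    (hbig : #(PreFun κ) < #(branches κ T))
    (himg : IsContImage κ (branches κ T)) :
    HasCantorSubtree κ T := by
  let := baire κ
  obtain ⟨f, hf, hfs⟩ := himg
  let F : (K κ → K κ) → K κ → K κ := fun x => f x
  have hFcont : Continuous F := continuous_subtype_val.comp hf
  have hFrange : range F = branches κ T := (hfs.range_comp _).trans Subtype.range_coe
  obtain ⟨x₀, hx₀⟩ := exists_notMem_smallPart hκ.le (hFrange ▸ hbig)
  obtain ⟨l, y, hl, hfin, hinj⟩ := exists_cantor_scheme_s6 hκ.le hFcont hx₀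
  obtain ⟨lam, hlam⟩ :=
    exists_isLUB_of_bddAbove (bddAbove_range_of_aleph0_lt_cof (by rwa [hreg.cof_ord]) l)
  have hcut : ∀ b n, cut κ (resT κ (F (y b)) lam) (l n) = resT κ (F (y b)) (l n) :=
    fun b n => cut_resT (hlam.1 ⟨n, rfl⟩)
  refine hasCantorSubtree_of_injective hl hlam (Φ := fun b => resT κ (F (y b)) lam)
    (fun b b' h => hinj b b' fun n => ?_) (fun b => ⟨(f (y b)).2 lam, rfl⟩) fun n => ?_
  · rw [← hcut, ← hcut]
    exact congrArg (cut κ · (l n)) h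
  · simpa only [hcut] using (hfin n).countable

/-- Let `κ` be an uncountable regular cardinal and let `T` be a subtree
of `^{<κ}κ` with `|[T]| > κ^{<κ}`.  If `[T]` is a continuous image of `^κκ`, then `T`
contains a Cantor subtree. -/
theorem hasCantorSubtree_of_continuous_image
    (κ : Cardinal.{u}) (hκ : ℵ₀ < κ) (hreg : κ.IsRegular)
    (T : Set (PreFun κ)) (hsub : IsSubtree κ T)
    (hbig : #(PreFun κ) < #(branches κ T))
    (himg : IsContImage κ (branches κ T)) :
    HasCantorSubtree κ T :=
  hasCantorSubtree_of_continuous_image_general κ hκ hreg T hbig himg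

end GBaire
end
end
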